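/- arXiv:1904.03655 — 3 statements merged into one kernel-verified Lean document; each statement's English description precedes it below -/
import Mathlib

section
/- Let X be a complex Hilbert space and let A, B : X → X be self-adjoint compact linear operators. Then the operator B − A has only finitely many negative eigenvalues (i.e., the set of eigenvalues of B − A lying in (−∞, 0) is finite) if and only if there exists a finite-dimensional subspace V of X such that ⟨(B − A)v, v⟩ ≥ 0 for all v in the orthogonal complement of V. -/
open scoped InnerProductSpace

open Filter Topology Pointwise

set_option linter.unusedSectionVars false

section Aux
variable {X : Type*} [NormedAddCommGroup X] [InnerProductSpace ℂ X] [CompleteSpace X]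


lemma form_cs (T : X →L[ℂ] X) (hsymm : (T : X →ₗ[ℂ] X).IsSymmetric) {U : Submodule ℂ X}
    (hU : ∀ x ∈ U, 0 ≤ (⟪T x, x⟫_ℂ).re) (x y : U) :
    ‖(⟪T x, (y : X)⟫_ℂ)‖ * ‖(⟪T y, (x : X)⟫_ℂ)‖
      ≤ (⟪T x, (x : X)⟫_ℂ).re * (⟪T y, (y : X)⟫_ℂ).re := by
  let c : PreInnerProductSpace.Core ℂ U :=
  { inner := fun a b => ⟪T a, (b : X)⟫_ℂ
    conj_inner_symm := fun a b => by
      show (starRingEnd ℂ) ⟪T (b : X), (a : X)⟫_ℂ = ⟪T (a : X), (b : X)⟫_ℂ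
      have h := hsymm (b : X) (a : X)
      simp only [ContinuousLinearMap.coe_coe] at h
      rw [h, inner_conj_symm]
    re_inner_nonneg := fun a => hU a a.2
    add_left := fun a b z => by
      show ⟪T ((a : X) + (b : X)), (z : X)⟫_ℂ = ⟪T (a : X), (z : X)⟫_ℂ + ⟪T (b : X), (z : X)⟫_ℂ
      rw [map_add, inner_add_left]
    smul_left := fun a b r => by
      show ⟪T (r • (a : X)), (b : X)⟫_ℂ = (starRingEnd ℂ) r * ⟪T (a : X), (b : X)⟫_ℂ
      rw [map_smul, inner_smul_left] }
  exact InnerProductSpace.Core.inner_mul_inner_self_le (𝕜 := ℂ) (F := U) (c := c) x y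

lemma re_inner_le (T : X →L[ℂ] X) (x : X) : (⟪T x, x⟫_ℂ).re ≤ ‖T‖ * (‖x‖ * ‖x‖) := by
  calc (⟪T x, x⟫_ℂ).re ≤ ‖(⟪T x, x⟫_ℂ)‖ := Complex.re_le_norm _
    _ ≤ ‖T x‖ * ‖x‖ := norm_inner_le_norm _ _
    _ ≤ (‖T‖ * ‖x‖) * ‖x‖ := by
        have := T.le_opNorm x
        nlinarith [norm_nonneg x, norm_nonneg (T x)]
    _ = ‖T‖ * (‖x‖ * ‖x‖) := by ring

lemma exists_neg_eigenvector (T : X →L[ℂ] X) (hT : IsSelfAdjoint T)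
    (hTc : IsCompactOperator (T : X → X)) {U : Submodule ℂ X}
    (hcl : IsClosed (U : Set X)) (hinv : ∀ x ∈ U, T x ∈ U) {u : X} (hu : u ∈ U)
    (hneg : (⟪T u, u⟫_ℂ).re < 0) :
    ∃ m : ℝ, m < 0 ∧ ∃ v ∈ U, v ≠ 0 ∧ T v = (m : ℂ) • v := by
  have hsymm : (T : X →ₗ[ℂ] X).IsSymmetric := hT.isSymmetric
  set f : X → ℝ := fun x => (⟪T x, x⟫_ℂ).re with hf
  have hu0 : u ≠ 0 := by rintro rfl; simp [hf] at hneg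
  have hscale : ∀ (c : ℝ) (y : X), f (((c : ℝ) : ℂ) • y) = (c * c) * f y := by
    intro c y
    have h : (⟪T (((c : ℝ) : ℂ) • y), ((c : ℝ) : ℂ) • y⟫_ℂ) = ((c * c : ℝ) : ℂ) * ⟪T y, y⟫_ℂ := by
      rw [map_smul, inner_smul_left, inner_smul_right, Complex.conj_ofReal]
      push_cast; ring
    simp only [hf]
    rw [h, Complex.re_ofReal_mul]
  set s : Set ℝ := f '' {x | x ∈ U ∧ ‖x‖ = 1} with hs
  have hbdd : BddBelow s := by
    refine ⟨-‖T‖, ?_⟩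
    rintro r ⟨x, ⟨hxU, hx1⟩, rfl⟩
    have h1 : |(⟪T x, x⟫_ℂ).re| ≤ ‖(⟪T x, x⟫_ℂ)‖ := Complex.abs_re_le_norm _
    have h2 : ‖(⟪T x, x⟫_ℂ)‖ ≤ ‖T x‖ * ‖x‖ := norm_inner_le_norm _ _
    have h3 : ‖T x‖ ≤ ‖T‖ * ‖x‖ := T.le_opNorm x
    rw [hx1] at h2 h3
    simp only [mul_one] at h2 h3
    have : |f x| ≤ ‖T‖ := le_trans h1 (le_trans h2 h3)
    linarith [abs_le.1 this |>.1]
  -- the normalized u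
  have hunorm : ‖u‖ ≠ 0 := norm_ne_zero_iff.2 hu0
  set w : X := ((‖u‖⁻¹ : ℝ) : ℂ) • u with hw
  have hwU : w ∈ U := U.smul_mem _ hu
  have hw1 : ‖w‖ = 1 := by
    rw [hw, norm_smul]
    simp [norm_inv, hunorm]
  have hfw : f w < 0 := by
    rw [hw, hscale]
    have : 0 < ‖u‖⁻¹ * ‖u‖⁻¹ := by positivity
    nlinarith
  have hsne : s.Nonempty := ⟨f w, ⟨w, ⟨hwU, hw1⟩, rfl⟩⟩
  set m : ℝ := sInf s with hm
  have hmneg : m < 0 := lt_of_le_of_lt (csInf_le hbdd ⟨w, ⟨hwU, hw1⟩, rfl⟩) hfw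
  have hm0 : (m : ℂ) ≠ 0 := by exact_mod_cast hmneg.ne
  -- minimizing sequence
  obtain ⟨r, -, hrlim, hrmem⟩ := exists_seq_tendsto_sInf hsne hbdd
  choose x hx hfx using hrmem
  have hxU : ∀ n, x n ∈ U := fun n => (hx n).1
  have hx1 : ∀ n, ‖x n‖ = 1 := fun n => (hx n).2
  have hflim : Tendsto (fun n => f (x n)) atTop (𝓝 m) := by
    simpa [hfx] using hrlim
  -- the operator P = T - m
  set P : X →L[ℂ] X := T - (m : ℂ) • ContinuousLinearMap.id ℂ X with hP
  have hPapp : ∀ y : X, P y = T y - (m : ℂ) • y := fun y => rfl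
  have hPsymm : (P : X →ₗ[ℂ] X).IsSymmetric := by
    intro a b
    simp only [ContinuousLinearMap.coe_coe, hPapp, inner_sub_left, inner_sub_right,
      inner_smul_left, inner_smul_right, Complex.conj_ofReal]
    have := hsymm a b
    simp only [ContinuousLinearMap.coe_coe] at this
    rw [this]
  have hPinv : ∀ y ∈ U, P y ∈ U := fun y hy => by
    rw [hPapp]; exact U.sub_mem (hinv y hy) (U.smul_mem _ hy)
  have hPre : ∀ y : X, (⟪P y, y⟫_ℂ).re = f y - m * (‖y‖ * ‖y‖) := by
    intro y
    rw [hPapp, inner_sub_left, inner_smul_left, Complex.conj_ofReal]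
    rw [Complex.sub_re, Complex.re_ofReal_mul, ← @inner_self_eq_norm_mul_norm ℂ]
    rfl
  have hPU : ∀ y ∈ U, 0 ≤ (⟪P y, y⟫_ℂ).re := by
    intro y hy
    rw [hPre]
    rcases eq_or_ne y 0 with rfl | hy0
    · simp [hf]
    · have hyn : ‖y‖ ≠ 0 := norm_ne_zero_iff.2 hy0
      set z : X := ((‖y‖⁻¹ : ℝ) : ℂ) • y with hz
      have hz1 : ‖z‖ = 1 := by rw [hz, norm_smul]; simp [hyn]
      have hmz : m ≤ f z := csInf_le hbdd ⟨z, ⟨U.smul_mem _ hy, hz1⟩, rfl⟩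
      have hfz : f z = (‖y‖⁻¹ * ‖y‖⁻¹) * f y := by rw [hz, hscale]
      rw [hfz] at hmz
      have hpos : 0 < ‖y‖ * ‖y‖ :=
        mul_pos (lt_of_le_of_ne (norm_nonneg y) (Ne.symm hyn))
          (lt_of_le_of_ne (norm_nonneg y) (Ne.symm hyn))
      have h3 := mul_le_mul_of_nonneg_right hmz hpos.le
      have h4 : ‖y‖⁻¹ * ‖y‖⁻¹ * f y * (‖y‖ * ‖y‖) = f y := by field_simp
      rw [h4] at h3
      nlinarith
  -- ‖P (x n)‖ ^ 2 ≤ e n * ‖P‖ where e n → 0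
  have hen : Tendsto (fun n => (⟪P (x n), x n⟫_ℂ).re) atTop (𝓝 0) := by
    have : (fun n => (⟪P (x n), x n⟫_ℂ).re) = fun n => f (x n) - m := by
      funext n; rw [hPre, hx1 n]; ring
    rw [this]
    simpa using hflim.sub (tendsto_const_nhds (x := m))
  have hkey : ∀ n, ‖P (x n)‖ ^ 2 ≤ (⟪P (x n), x n⟫_ℂ).re * ‖P‖ := by
    intro n
    have hcs := form_cs P hPsymm hPU ⟨x n, hxU n⟩ ⟨P (x n), hPinv _ (hxU n)⟩
    simp only [Submodule.coe_mk] at hcs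
    have h2 : (⟪P (P (x n)), x n⟫_ℂ) = (⟪P (x n), P (x n)⟫_ℂ) := by
      have := hPsymm (P (x n)) (x n)
      simpa only [ContinuousLinearMap.coe_coe] using this
    have hnorm1 : ‖(⟪P (x n), P (x n)⟫_ℂ)‖ = ‖P (x n)‖ ^ 2 := by
      rw [@inner_self_eq_norm_sq_to_K ℂ, norm_pow, RCLike.norm_ofReal, abs_norm]
    rw [h2, hnorm1] at hcs
    have h2' := re_inner_le P (P (x n))
    have he := hPU _ (hxU n)
    rcases eq_or_ne (‖P (x n)‖) 0 with h0 | h0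
    · rw [h0]
      have : (0:ℝ) ≤ ‖P‖ := norm_nonneg _
      nlinarith
    · have hpos : 0 < ‖P (x n)‖ ^ 2 := by positivity
      nlinarith [mul_le_mul_of_nonneg_left h2' he]
  have hsq : Tendsto (fun n => ‖P (x n)‖ ^ 2) atTop (𝓝 0) := by
    refine squeeze_zero (fun n => by positivity) hkey ?_
    simpa using hen.mul_const ‖P‖
  have hPlim : Tendsto (fun n => P (x n)) atTop (𝓝 0) := by
    rw [tendsto_zero_iff_norm_tendsto_zero]
    have h1 : Tendsto (fun n => Real.sqrt (‖P (x n)‖ ^ 2)) atTop (𝓝 (Real.sqrt 0)) :=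
      (Real.continuous_sqrt.tendsto 0).comp hsq
    simpa [Real.sqrt_sq (norm_nonneg _)] using h1
  have hTc' : IsCompactOperator (((T : X →ₗ[ℂ] X)) : X → X) := by
    simpa using hTc
  obtain ⟨K, hK, hTK⟩ := IsCompactOperator.image_closedBall_subset_compact (𝕜₁ := ℂ) hTc' 1
  have hmem : ∀ n, T (x n) ∈ K := by
    intro n
    apply hTK
    exact ⟨x n, by simp [Metric.mem_closedBall, hx1 n], rfl⟩
  obtain ⟨y, -, φ, hφ, hty⟩ := hK.tendsto_subseq hmem
  have hrepr : ∀ n, x n = ((m : ℂ))⁻¹ • (T (x n) - P (x n)) := by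
    intro n
    rw [hPapp]
    rw [sub_sub_cancel, smul_smul, inv_mul_cancel₀ hm0, one_smul]
  have hPsub : Tendsto (fun k => P (x (φ k))) atTop (𝓝 0) := hPlim.comp hφ.tendsto_atTop
  set v : X := ((m : ℂ))⁻¹ • y with hv
  have hxl : Tendsto (fun k => x (φ k)) atTop (𝓝 v) := by
    have h1 : Tendsto (fun k => ((m : ℂ))⁻¹ • (T (x (φ k)) - P (x (φ k)))) atTop
        (𝓝 (((m : ℂ))⁻¹ • (y - 0))) := (hty.sub hPsub).const_smul _
    rw [sub_zero] at h1
    exact h1.congr fun k => (hrepr (φ k)).symm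
  have hvU : v ∈ U := hcl.mem_of_tendsto hxl (Filter.Eventually.of_forall fun k => hxU _)
  have hv1 : ‖v‖ = 1 := by
    have h1 : Tendsto (fun k => ‖x (φ k)‖) atTop (𝓝 ‖v‖) := hxl.norm
    have h2 : Tendsto (fun k => ‖x (φ k)‖) atTop (𝓝 1) := by
      simpa [hx1] using (tendsto_const_nhds : Tendsto (fun _ : ℕ => (1:ℝ)) atTop (𝓝 1))
    exact tendsto_nhds_unique h1 h2
  have hPv : P v = 0 := by
    have h1 : Tendsto (fun k => P (x (φ k))) atTop (𝓝 (P v)) :=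
      (P.continuous.tendsto v).comp hxl
    exact tendsto_nhds_unique h1 hPsub
  refine ⟨m, hmneg, v, hvU, ?_, ?_⟩
  · intro h; rw [h] at hv1; simp at hv1
  · have := hPv
    rw [hPapp, sub_eq_zero] at this
    exact this



lemma eigenspace_isClosed (T : X →L[ℂ] X) (μ : ℂ) :
    IsClosed ((Module.End.eigenspace (T : X →ₗ[ℂ] X) μ : Submodule ℂ X) : Set X) := by
  have h : ((Module.End.eigenspace (T : X →ₗ[ℂ] X) μ : Submodule ℂ X) : Set X)
      = {x : X | T x - μ • x = 0} := by
    ext x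
    simp only [SetLike.mem_coe, Module.End.mem_eigenspace_iff, ContinuousLinearMap.coe_coe,
      Set.mem_setOf_eq, sub_eq_zero]
  rw [h]
  exact isClosed_eq (T.continuous.sub (continuous_id.const_smul μ)) continuous_const

lemma eig_findim (T : X →L[ℂ] X) (hTc : IsCompactOperator (T : X → X)) {μ : ℂ} (hμ : μ ≠ 0) :
    FiniteDimensional ℂ (Module.End.eigenspace (T : X →ₗ[ℂ] X) μ) := by
  set E := Module.End.eigenspace (T : X →ₗ[ℂ] X) μ with hE
  have hTc' : IsCompactOperator (((T : X →ₗ[ℂ] X)) : X → X) := by simpa using hTc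
  obtain ⟨K, hK, hTK⟩ := IsCompactOperator.image_closedBall_subset_compact (𝕜₁ := ℂ) hTc' 1
  set C : Set X := (E : Set X) ∩ Metric.closedBall (0 : X) 1 with hC
  have hCcl : IsClosed C := (eigenspace_isClosed T μ).inter Metric.isClosed_closedBall
  have hsub : C ⊆ μ⁻¹ • K := by
    rintro x ⟨hxE, hx1⟩
    refine ⟨T x, hTK ⟨x, hx1, rfl⟩, ?_⟩
    have : T x = μ • x := by
      have := (Module.End.mem_eigenspace_iff).1 hxE
      simpa using this
    show μ⁻¹ • T x = x
    rw [this, smul_smul, inv_mul_cancel₀ hμ, one_smul]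
  have hKc : IsCompact (μ⁻¹ • K) := hK.smul _
  have hCc : IsCompact C := hKc.of_isClosed_subset hCcl hsub
  have himg : Subtype.val '' (Metric.closedBall (0 : E) 1) = C := by
    ext x
    constructor
    · rintro ⟨⟨x, hxE⟩, hx1, rfl⟩
      refine ⟨hxE, ?_⟩
      simpa [Metric.mem_closedBall, dist_eq_norm] using hx1
    · rintro ⟨hxE, hx1⟩
      refine ⟨⟨x, hxE⟩, ?_, rfl⟩
      simpa [Metric.mem_closedBall, dist_eq_norm] using hx1
  have hball : IsCompact (Metric.closedBall (0 : E) 1) := by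
    rw [Topology.IsEmbedding.isCompact_iff (Topology.IsEmbedding.subtypeVal)]
    rw [himg]
    exact hCc
  exact FiniteDimensional.of_isCompact_closedBall₀ (𝕜 := ℂ) one_pos hball

end Aux


/-- Lemma 2.2: for self-adjoint compact operators `A`, `B` on a complex
Hilbert space, `B - A` has only finitely many negative eigenvalues iff there is a
finite-dimensional subspace `V` with `⟨(B - A)v, v⟩ ≥ 0` for all `v ∈ Vᗮ`. -/
theorem finitely_many_negative_eigenvalues_iff
    {X : Type*} [NormedAddCommGroup X] [InnerProductSpace ℂ X] [CompleteSpace X]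
    (A B : X →L[ℂ] X) (hA : IsSelfAdjoint A) (hB : IsSelfAdjoint B)
    (hAc : IsCompactOperator (A : X → X)) (hBc : IsCompactOperator (B : X → X)) :
    {μ : ℝ | μ < 0 ∧ Module.End.HasEigenvalue ((B - A : X →L[ℂ] X) : X →ₗ[ℂ] X) (μ : ℂ)}.Finite
      ↔ ∃ V : Submodule ℂ X, FiniteDimensional ℂ V ∧
          ∀ v ∈ Vᗮ, 0 ≤ (⟪(B - A) v, v⟫_ℂ).re := by

  set T : X →L[ℂ] X := B - A with hTdef
  have hT : IsSelfAdjoint T := hB.sub hA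
  have hTc : IsCompactOperator (T : X → X) := hBc.sub hAc
  have hsymm : (T : X →ₗ[ℂ] X).IsSymmetric := hT.isSymmetric
  constructor
  · intro hfin
    set F := hfin.toFinset with hF
    set g : ℝ → Submodule ℂ X := fun μ => Module.End.eigenspace (T : X →ₗ[ℂ] X) (μ : ℂ) with hg
    set V : Submodule ℂ X := ⨆ μ : F, g μ with hV
    haveI hgfd : ∀ μ : F, FiniteDimensional ℂ (g μ) := by
      rintro ⟨μ, hμ⟩
      have hμ' : μ < 0 := (hfin.mem_toFinset.1 hμ).1
      exact eig_findim T hTc (by exact_mod_cast hμ'.ne)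
    haveI hVfd : FiniteDimensional ℂ V := by
      rw [hV]; infer_instance
    refine ⟨V, hVfd, ?_⟩
    intro v hv
    by_contra hlt
    push_neg at hlt
    have hVinvT : ∀ w ∈ V, T w ∈ V := by
      intro w hw
      refine Submodule.iSup_induction (motive := fun w => T w ∈ V) _ hw ?_ ?_ ?_
      · rintro ⟨μ, hμ⟩ x hx
        have hx' : T x = ((μ : ℝ) : ℂ) • x := by
          have := Module.End.mem_eigenspace_iff.1 hx
          simpa using this
        rw [hx']
        exact Submodule.mem_iSup_of_mem ⟨μ, hμ⟩ ((g μ).smul_mem _ hx)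
      · simp
      · intro a b ha hb; rw [map_add]; exact V.add_mem ha hb
    have hUinv : ∀ x ∈ Vᗮ, T x ∈ Vᗮ := by
      intro x hx
      rw [Submodule.mem_orthogonal]
      intro w hw
      have h0 : (⟪T w, x⟫_ℂ) = 0 := (Submodule.mem_orthogonal V x).1 hx (T w) (hVinvT w hw)
      have h1 : (⟪x, T w⟫_ℂ) = 0 := by rw [← inner_conj_symm, h0, map_zero]
      have h2 : (⟪T x, w⟫_ℂ) = 0 := by
        have := hsymm x w
        simp only [ContinuousLinearMap.coe_coe] at this
        rw [this, h1]
      rw [← inner_conj_symm, h2, map_zero]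
    obtain ⟨m, hm, v', hv'U, hv'0, hTv'⟩ :=
      exists_neg_eigenvector T hT hTc (Submodule.isClosed_orthogonal V) hUinv hv hlt
    have hv'eig : v' ∈ g m := by
      rw [hg]
      exact Module.End.mem_eigenspace_iff.2 (by simpa using hTv')
    have heig : Module.End.HasEigenvalue (T : X →ₗ[ℂ] X) ((m : ℝ) : ℂ) :=
      Module.End.hasEigenvalue_of_hasEigenvector ⟨hv'eig, hv'0⟩
    have hmem : m ∈ F := hfin.mem_toFinset.2 ⟨hm, heig⟩
    have hv'V : v' ∈ V := Submodule.mem_iSup_of_mem ⟨m, hmem⟩ hv'eig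
    have hdis := Submodule.orthogonal_disjoint V
    exact hv'0 (Submodule.disjoint_def.1 hdis v' hv'V hv'U)
  · rintro ⟨V, hVfd, hVpos⟩
    by_contra hinf
    set n := Module.finrank ℂ V + 1 with hn
    obtain ⟨t, hts, htfin, htcard⟩ := Set.Infinite.exists_subset_ncard_eq hinf n
    haveI : Fintype t := htfin.fintype
    have hcard : Fintype.card t = n := by
      rw [← Nat.card_eq_fintype_card, Nat.card_coe_set_eq, htcard]
    have hμneg : ∀ μ : t, (μ : ℝ) < 0 := fun μ => (hts μ.2).1
    have hex : ∀ μ : t, ∃ e : X, ‖e‖ = 1 ∧ T e = (((μ : ℝ)) : ℂ) • e := by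
      intro μ
      obtain ⟨v, hv⟩ := (hts μ.2).2.exists_hasEigenvector
      have hv0 : v ≠ 0 := hv.2
      have hvn : ‖v‖ ≠ 0 := norm_ne_zero_iff.2 hv0
      refine ⟨((‖v‖⁻¹ : ℝ) : ℂ) • v, ?_, ?_⟩
      · rw [norm_smul]; simp [hvn]
      · have h1 : (T : X →ₗ[ℂ] X) v = (((μ : ℝ)) : ℂ) • v := Module.End.mem_eigenspace_iff.1 hv.1
        simp only [ContinuousLinearMap.coe_coe] at h1
        rw [map_smul, h1, smul_comm]
    choose e he1 heT using hex
    have horth : Orthonormal ℂ e := by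
      refine ⟨he1, ?_⟩
      intro i j hij
      have hne : ((i : ℝ) : ℂ) ≠ ((j : ℝ) : ℂ) := by
        exact_mod_cast fun h => hij (Subtype.ext h)
      have h1 : (⟪T (e i), e j⟫_ℂ) = ((i : ℝ) : ℂ) * ⟪e i, e j⟫_ℂ := by
        rw [heT i, inner_smul_left, Complex.conj_ofReal]
      have h2 : (⟪T (e i), e j⟫_ℂ) = ((j : ℝ) : ℂ) * ⟪e i, e j⟫_ℂ := by
        have hs := hsymm (e i) (e j)
        simp only [ContinuousLinearMap.coe_coe] at hs
        rw [hs, heT j, inner_smul_right]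
      have h3 : (((i : ℝ) : ℂ) - ((j : ℝ) : ℂ)) * ⟪e i, e j⟫_ℂ = 0 := by
        rw [sub_mul, ← h1, ← h2, sub_self]
      rcases mul_eq_zero.1 h3 with h | h
      · exact absurd (sub_eq_zero.1 h) hne
      · exact h
    set W : Submodule ℂ X := Submodule.span ℂ (Set.range e) with hW
    have hli := horth.linearIndependent
    haveI : FiniteDimensional ℂ W := FiniteDimensional.span_of_finite ℂ (Set.finite_range e)
    have hWrank : Module.finrank ℂ W = n := by
      rw [hW, finrank_span_eq_card hli, hcard]
    set L : W →ₗ[ℂ] V := (V.orthogonalProjectionOnto).toLinearMap.comp W.subtype with hL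
    have hLni : ¬ Function.Injective L := by
      intro hinj
      have hle := LinearMap.finrank_le_finrank_of_injective hinj
      rw [hWrank] at hle
      omega
    have hker : LinearMap.ker L ≠ ⊥ := fun h => hLni (LinearMap.ker_eq_bot.1 h)
    obtain ⟨w, hwker, hw0⟩ := Submodule.exists_mem_ne_zero_of_ne_bot hker
    have hwproj : V.orthogonalProjectionOnto (w : X) = 0 := hwker
    have hwperp : (w : X) ∈ Vᗮ := Submodule.orthogonalProjectionOnto_eq_zero_iff.1 hwproj
    have hpos := hVpos _ hwperp
    have hwmem : (w : X) ∈ Submodule.span ℂ (Set.range e) := w.2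
    rw [Submodule.mem_span_range_iff_exists_fun ℂ] at hwmem
    obtain ⟨c, hc⟩ := hwmem
    have hinner : (⟪T (w : X), (w : X)⟫_ℂ)
        = ∑ i : t, (starRingEnd ℂ) (c i) * (starRingEnd ℂ) (((i : ℝ)) : ℂ) * c i := by
      conv_lhs => rw [← hc]
      rw [map_sum, sum_inner]
      refine Finset.sum_congr rfl fun i _ => ?_
      rw [map_smul, heT i, inner_smul_left, inner_smul_left, horth.inner_right_fintype]
      ring
    have hre : (⟪T (w : X), (w : X)⟫_ℂ).re = ∑ i : t, (i : ℝ) * Complex.normSq (c i) := by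
      rw [hinner, Complex.re_sum]
      refine Finset.sum_congr rfl fun i _ => ?_
      have : (starRingEnd ℂ) (c i) * (starRingEnd ℂ) (((i : ℝ)) : ℂ) * c i
          = (((i : ℝ) * Complex.normSq (c i) : ℝ) : ℂ) := by
        rw [Complex.conj_ofReal]
        have h4 : (starRingEnd ℂ) (c i) * c i = (Complex.normSq (c i) : ℂ) := by
          rw [mul_comm, Complex.mul_conj]
        push_cast
        rw [mul_comm ((starRingEnd ℂ) (c i)) _, mul_assoc, h4]
      rw [this, Complex.ofReal_re]
    have hci : ∃ i, c i ≠ 0 := by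
      by_contra hall
      push_neg at hall
      apply hw0
      have : (w : X) = 0 := by rw [← hc]; simp [hall]
      exact Subtype.ext this
    obtain ⟨i0, hi0⟩ := hci
    have hsum : (∑ i : t, (i : ℝ) * Complex.normSq (c i)) < 0 := by
      have := Finset.sum_lt_sum
        (f := fun i : t => (i : ℝ) * Complex.normSq (c i)) (g := fun _ => (0 : ℝ))
        (fun i _ => mul_nonpos_iff.2 (Or.inr ⟨(hμneg i).le, Complex.normSq_nonneg _⟩))
        ⟨i0, Finset.mem_univ _, mul_neg_of_neg_of_pos (hμneg i0) (Complex.normSq_pos.2 hi0)⟩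
      simpa using this
    rw [hre] at hpos
    linarith
end

section
/- Let X, Y, and Z be complex Hilbert spaces, and let A : X → Y and B : X → Z be bounded linear operators. Then there exists a constant C > 0 such that ‖Ax‖² ≤ C‖Bx‖² for all x ∈ X if and only if the range of the adjoint A* : Y → X is contained in the range of the adjoint B* : Z → X. -/
open ContinuousLinearMap

/-- Forward direction: a norm bound `‖Ax‖ ≤ c‖Bx‖` implies `Ran(A*) ⊆ Ran(B*)`. -/
theorem range_adjoint_subset_of_bound
    {X Y Z : Type*} [NormedAddCommGroup X] [InnerProductSpace ℂ X] [CompleteSpace X]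
    [NormedAddCommGroup Y] [InnerProductSpace ℂ Y] [CompleteSpace Y]
    [NormedAddCommGroup Z] [InnerProductSpace ℂ Z] [CompleteSpace Z]
    (A : X →L[ℂ] Y) (B : X →L[ℂ] Z) (c : ℝ) (hc : 0 ≤ c)
    (hbd : ∀ x : X, ‖A x‖ ≤ c * ‖B x‖) :
    Set.range (ContinuousLinearMap.adjoint A) ⊆ Set.range (ContinuousLinearMap.adjoint B) := by
  rintro _ ⟨y, rfl⟩
  -- kernel inclusion
  have hker : LinearMap.ker (B : X →ₗ[ℂ] Z) ≤ LinearMap.ker (A : X →ₗ[ℂ] Y) := by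
    intro x hx
    simp only [LinearMap.mem_ker, ContinuousLinearMap.coe_coe] at hx ⊢
    have := hbd x
    rw [hx] at this
    simp only [norm_zero, mul_zero] at this
    exact norm_le_zero_iff.mp this
  -- the factor map on the range of B
  let e := LinearMap.quotKerEquivRange (B : X →ₗ[ℂ] Z)
  let Abar : (X ⧸ LinearMap.ker (B : X →ₗ[ℂ] Z)) →ₗ[ℂ] Y :=
    (LinearMap.ker (B : X →ₗ[ℂ] Z)).liftQ (A : X →ₗ[ℂ] Y) hker
  let g : LinearMap.range (B : X →ₗ[ℂ] Z) →ₗ[ℂ] Y := Abar.comp (e.symm : _ →ₗ[ℂ] _)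
  have hg : ∀ x : X, g ⟨B x, LinearMap.mem_range_self _ x⟩ = A x := by
    intro x
    have : e (Submodule.Quotient.mk x) = ⟨B x, LinearMap.mem_range_self _ x⟩ := by
      apply Subtype.ext
      simp [e, LinearMap.quotKerEquivRange]
    have h2 : e.symm ⟨B x, LinearMap.mem_range_self _ x⟩ = Submodule.Quotient.mk x := by
      rw [← this, LinearEquiv.symm_apply_apply]
    simp only [g, LinearMap.comp_apply, LinearEquiv.coe_coe, h2]
    rfl
  -- functional on range B
  let f : LinearMap.range (B : X →ₗ[ℂ] Z) →ₗ[ℂ] ℂ :=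
    (innerSL ℂ y).toLinearMap.comp g
  have hf : ∀ x : X, f ⟨B x, LinearMap.mem_range_self _ x⟩ = inner ℂ y (A x) := by
    intro x
    simp [f, hg x]
  have hfbd : ∀ v : LinearMap.range (B : X →ₗ[ℂ] Z), ‖f v‖ ≤ (c * ‖y‖) * ‖v‖ := by
    rintro ⟨-, x, rfl⟩
    show ‖f ⟨B x, LinearMap.mem_range_self _ x⟩‖ ≤ (c * ‖y‖) * ‖B x‖
    rw [hf x]
    calc ‖(inner ℂ y (A x) : ℂ)‖ ≤ ‖y‖ * ‖A x‖ := norm_inner_le_norm _ _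
      _ ≤ ‖y‖ * (c * ‖B x‖) := by
          exact mul_le_mul_of_nonneg_left (hbd x) (norm_nonneg y)
      _ = (c * ‖y‖) * ‖B x‖ := by ring
  let F : LinearMap.range (B : X →ₗ[ℂ] Z) →L[ℂ] ℂ := f.mkContinuous (c * ‖y‖) hfbd
  obtain ⟨φ, hφ, -⟩ := exists_extension_norm_eq (LinearMap.range (B : X →ₗ[ℂ] Z)) F
  refine ⟨(InnerProductSpace.toDual ℂ Z).symm φ, ?_⟩
  apply ext_inner_right ℂ
  intro x
  rw [ContinuousLinearMap.adjoint_inner_left, ContinuousLinearMap.adjoint_inner_left,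
    InnerProductSpace.toDual_symm_apply]
  have := hφ ⟨B x, LinearMap.mem_range_self _ x⟩
  rw [this]
  exact hf x

/-- Factorization through the adjoint from range inclusion (closed graph theorem). -/
theorem exists_factor_of_range_subset
    {X Y Z : Type*} [NormedAddCommGroup X] [InnerProductSpace ℂ X] [CompleteSpace X]
    [NormedAddCommGroup Y] [InnerProductSpace ℂ Y] [CompleteSpace Y]
    [NormedAddCommGroup Z] [InnerProductSpace ℂ Z] [CompleteSpace Z]
    (S : Y →L[ℂ] X) (R : Z →L[ℂ] X)
    (h : Set.range S ⊆ Set.range R) :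
    ∃ T : Y →L[ℂ] Z, S = R.comp T := by
  classical
  set K : Submodule ℂ Z := (LinearMap.ker (R : Z →ₗ[ℂ] X))ᗮ with hK
  haveI : CompleteSpace (LinearMap.ker (R : Z →ₗ[ℂ] X)) :=
    (ContinuousLinearMap.isClosed_ker R).completeSpace_coe
  haveI : CompleteSpace K := Submodule.instOrthogonalCompleteSpace (LinearMap.ker (R : Z →ₗ[ℂ] X))
  let R' : K →L[ℂ] X := R.comp K.subtypeL
  have hinj : Function.Injective R' := by
    intro k k' hkk
    have hmem : (k - k' : Z) ∈ LinearMap.ker (R : Z →ₗ[ℂ] X) := by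
      simp only [LinearMap.mem_ker]
      have : R (k : Z) = R (k' : Z) := hkk
      simp [map_sub, this]
    have hmem2 : (k - k' : Z) ∈ K := K.sub_mem k.2 k'.2
    have : (k - k' : Z) = 0 := by
      have h0 := (Submodule.mem_orthogonal (LinearMap.ker (R : Z →ₗ[ℂ] X)) (k - k' : Z)).mp hmem2
        (k - k' : Z) hmem
      exact inner_self_eq_zero.mp h0
    exact Subtype.ext (sub_eq_zero.mp this)
  have hexists : ∀ y : Y, ∃ k : K, R' k = S y := by
    intro y
    obtain ⟨z, hz⟩ := h (Set.mem_range_self y)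
    refine ⟨⟨z - Submodule.orthogonalProjectionOnto (LinearMap.ker (R : Z →ₗ[ℂ] X)) z,
      Submodule.sub_starProjection_mem_orthogonal z⟩, ?_⟩
    have hmem : (Submodule.orthogonalProjectionOnto (LinearMap.ker (R : Z →ₗ[ℂ] X)) z : Z) ∈ LinearMap.ker (R : Z →ₗ[ℂ] X) :=
      (Submodule.orthogonalProjectionOnto (LinearMap.ker (R : Z →ₗ[ℂ] X)) z).2
    simp only [R', ContinuousLinearMap.comp_apply, Submodule.subtypeL_apply]
    rw [map_sub, (by simpa using LinearMap.mem_ker.mp hmem :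
      R (Submodule.orthogonalProjectionOnto (LinearMap.ker (R : Z →ₗ[ℂ] X)) z : Z) = 0), sub_zero, hz]
  choose t ht using hexists
  have hadd : ∀ y y', t (y + y') = t y + t y' := by
    intro y y'
    apply hinj
    rw [ht, map_add, map_add, ht, ht]
  have hsmul : ∀ (a : ℂ) y, t (a • y) = a • t y := by
    intro a y
    apply hinj
    rw [ht, map_smul, map_smul, ht]
  let T₀ : Y →ₗ[ℂ] K :=
    { toFun := t, map_add' := hadd, map_smul' := hsmul }
  have hgraph : IsClosed (T₀.graph : Set (Y × K)) := by
    have : (T₀.graph : Set (Y × K)) = {p : Y × K | R' p.2 = S p.1} := by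
      ext p
      simp only [SetLike.mem_coe, LinearMap.mem_graph_iff, Set.mem_setOf_eq]
      constructor
      · intro hp; rw [hp]; exact ht p.1
      · intro hp; exact hinj (by rw [hp]; exact (ht p.1).symm)
    rw [this]
    exact isClosed_eq (R'.continuous.comp continuous_snd) (S.continuous.comp continuous_fst)
  let T₀L : Y →L[ℂ] K := ContinuousLinearMap.ofIsClosedGraph hgraph
  refine ⟨K.subtypeL.comp T₀L, ?_⟩
  ext y
  have : T₀L y = t y := by
    have := ContinuousLinearMap.coeFn_ofIsClosedGraph hgraph
    exact congrFun this y
  simp only [ContinuousLinearMap.comp_apply, Submodule.subtypeL_apply, this]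
  exact (ht y).symm

/-- Lemma 2.6: for bounded operators `A : X → Y`, `B : X → Z` between
complex Hilbert spaces, `∃ C > 0, ‖Ax‖² ≤ C‖Bx‖²` for all `x` iff `Ran(A*) ⊆ Ran(B*)`. -/
theorem norm_sq_le_iff_range_adjoint_subset
    {X Y Z : Type*} [NormedAddCommGroup X] [InnerProductSpace ℂ X] [CompleteSpace X]
    [NormedAddCommGroup Y] [InnerProductSpace ℂ Y] [CompleteSpace Y]
    [NormedAddCommGroup Z] [InnerProductSpace ℂ Z] [CompleteSpace Z]
    (A : X →L[ℂ] Y) (B : X →L[ℂ] Z) :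
    (∃ C > 0, ∀ x : X, ‖A x‖ ^ 2 ≤ C * ‖B x‖ ^ 2) ↔
      Set.range (ContinuousLinearMap.adjoint A) ⊆ Set.range (ContinuousLinearMap.adjoint B) := by
  constructor
  · rintro ⟨C, hC, hbd⟩
    apply range_adjoint_subset_of_bound A B (Real.sqrt C) (Real.sqrt_nonneg C)
    intro x
    have h1 : ‖A x‖ ^ 2 ≤ (Real.sqrt C * ‖B x‖) ^ 2 := by
      rw [mul_pow, Real.sq_sqrt hC.le]
      exact hbd x
    have h2 : 0 ≤ Real.sqrt C * ‖B x‖ := by positivity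
    calc ‖A x‖ = Real.sqrt (‖A x‖ ^ 2) := (Real.sqrt_sq (norm_nonneg _)).symm
      _ ≤ Real.sqrt ((Real.sqrt C * ‖B x‖) ^ 2) := Real.sqrt_le_sqrt h1
      _ = Real.sqrt C * ‖B x‖ := Real.sqrt_sq h2
  · intro h
    obtain ⟨T, hT⟩ := exists_factor_of_range_subset
      (ContinuousLinearMap.adjoint A) (ContinuousLinearMap.adjoint B) h
    have hA : A = (ContinuousLinearMap.adjoint T).comp B := by
      have := congrArg ContinuousLinearMap.adjoint hT
      rwa [ContinuousLinearMap.adjoint_adjoint, ContinuousLinearMap.adjoint_comp,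
        ContinuousLinearMap.adjoint_adjoint] at this
    refine ⟨‖ContinuousLinearMap.adjoint T‖ ^ 2 + 1, by positivity, fun x => ?_⟩
    have h1 : ‖A x‖ ≤ ‖ContinuousLinearMap.adjoint T‖ * ‖B x‖ := by
      rw [hA]; exact (ContinuousLinearMap.adjoint T).le_opNorm (B x)
    nlinarith [norm_nonneg (A x), norm_nonneg (B x), norm_nonneg (ContinuousLinearMap.adjoint T),
      opNorm_nonneg (ContinuousLinearMap.adjoint T)]
end

section
/- Let X, Y, Z be complex Hilbert spaces and let A : X → Y and B : X → Z be bounded linear operators. Suppose there exist a finite-dimensional subspace V of X and a constant C > 0 such that ‖Av‖² ≤ C‖Bv‖² for all v in the orthogonal complement of V, and suppose Ran(A*) ∩ Ran(B*) = {0}. Then the range of A* is finite-dimensional, with dim Ran(A*) ≤ dim V. -/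
set_option maxHeartbeats 1000000

/-- if `‖Av‖² ≤ C‖Bv‖²` holds on the orthogonal complement of a
finite-dimensional subspace `V ⊆ X` and `Ran(A*) ∩ Ran(B*) = {0}`, then `Ran(A*)` is
finite-dimensional with `dim Ran(A*) ≤ dim V`. -/
theorem finiteDimensional_range_adjoint_of_norm_le_on_orthogonal
    {X Y Z : Type*} [NormedAddCommGroup X] [InnerProductSpace ℂ X] [CompleteSpace X]
    [NormedAddCommGroup Y] [InnerProductSpace ℂ Y] [CompleteSpace Y]
    [NormedAddCommGroup Z] [InnerProductSpace ℂ Z] [CompleteSpace Z]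
    (A : X →L[ℂ] Y) (B : X →L[ℂ] Z)
    (V : Submodule ℂ X) (hV : FiniteDimensional ℂ V)
    (C : ℝ) (hC : 0 < C) (hAB : ∀ v ∈ Vᗮ, ‖A v‖ ^ 2 ≤ C * ‖B v‖ ^ 2)
    (hranges : LinearMap.range (ContinuousLinearMap.adjoint A : Y →ₗ[ℂ] X) ⊓
        LinearMap.range (ContinuousLinearMap.adjoint B : Z →ₗ[ℂ] X) = ⊥) :
    FiniteDimensional ℂ (LinearMap.range (ContinuousLinearMap.adjoint A : Y →ₗ[ℂ] X)) ∧
      Module.finrank ℂ (LinearMap.range (ContinuousLinearMap.adjoint A : Y →ₗ[ℂ] X)) ≤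
        Module.finrank ℂ V := by
  classical
  haveI : CompleteSpace V := FiniteDimensional.complete ℂ V
  set A' := ContinuousLinearMap.adjoint A with hA'
  set B' := ContinuousLinearMap.adjoint B with hB'
  set P : X →L[ℂ] X := Vᗮ.subtypeL ∘L (Vᗮ.orthogonalProjectionOnto) with hPdef
  have hPmem : ∀ v : X, P v ∈ Vᗮ := fun v => (Vᗮ.orthogonalProjectionOnto v).2
  have hPfix : ∀ u ∈ Vᗮ, P u = u := by
    intro u hu
    exact Submodule.starProjection_eq_self_iff.mpr hu
  -- the key inclusion
  have key : LinearMap.range (A' : Y →ₗ[ℂ] X) ≤ V ⊔ LinearMap.range (B' : Z →ₗ[ℂ] X) := by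
    rintro x ⟨y, rfl⟩
    -- the linear functional v ↦ ⟪y, A (P v)⟫ and the map v ↦ B (P v)
    set fl : X →ₗ[ℂ] ℂ := ((innerSL ℂ y) ∘L (A ∘L P)).toLinearMap with hfl
    set gl : X →ₗ[ℂ] Z := (B ∘L P).toLinearMap with hgl
    have hker : LinearMap.ker gl ≤ LinearMap.ker fl := by
      intro v hv
      have hg : B (P v) = 0 := hv
      have h1 : ‖A (P v)‖ ^ 2 ≤ C * ‖B (P v)‖ ^ 2 := hAB _ (hPmem v)
      rw [hg] at h1
      simp only [norm_zero] at h1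
      have h2 : A (P v) = 0 := by
        have h0 : ‖A (P v)‖ ^ 2 ≤ 0 := by linarith
        have h1' : ‖A (P v)‖ ^ 2 = 0 := le_antisymm h0 (sq_nonneg _)
        have h2' : ‖A (P v)‖ = 0 := by
          exact pow_eq_zero_iff (n := 2) (by norm_num) |>.mp h1'
        exact norm_eq_zero.mp h2'
      show (inner ℂ y (A (P v)) : ℂ) = 0
      simp [h2]
    set φ : LinearMap.range gl →ₗ[ℂ] ℂ :=
      (LinearMap.ker gl).liftQ fl hker ∘ₗ gl.quotKerEquivRange.symm.toLinearMap with hφ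
    have hφ_apply : ∀ v : X, φ ⟨gl v, LinearMap.mem_range_self gl v⟩ = fl v := by
      intro v
      have : gl.quotKerEquivRange (Submodule.Quotient.mk v)
          = ⟨gl v, LinearMap.mem_range_self gl v⟩ :=
        Subtype.ext (gl.quotKerEquivRange_apply_mk v)
      rw [hφ]
      simp [← this]
    have hbound : ∀ w : LinearMap.range gl, ‖φ w‖ ≤ (Real.sqrt C * ‖y‖) * ‖w‖ := by
      rintro ⟨w, v, rfl⟩
      rw [hφ_apply v]
      have h1 : ‖A (P v)‖ ^ 2 ≤ C * ‖B (P v)‖ ^ 2 := hAB _ (hPmem v)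
      have h2 : ‖A (P v)‖ ≤ Real.sqrt C * ‖B (P v)‖ := by
        have := Real.sqrt_le_sqrt h1
        rwa [Real.sqrt_sq (norm_nonneg _), Real.sqrt_mul hC.le,
          Real.sqrt_sq (norm_nonneg _)] at this
      have h3 : ‖fl v‖ ≤ ‖y‖ * ‖A (P v)‖ := by
        simpa [hfl] using norm_inner_le_norm (𝕜 := ℂ) y (A (P v))
      have h4 : ‖(⟨gl v, LinearMap.mem_range_self gl v⟩ : LinearMap.range gl)‖
          = ‖B (P v)‖ := rfl
      rw [h4]
      calc ‖fl v‖ ≤ ‖y‖ * ‖A (P v)‖ := h3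
        _ ≤ ‖y‖ * (Real.sqrt C * ‖B (P v)‖) := by
            exact mul_le_mul_of_nonneg_left h2 (norm_nonneg _)
        _ = (Real.sqrt C * ‖y‖) * ‖B (P v)‖ := by ring
    set φL : LinearMap.range gl →L[ℂ] ℂ := φ.mkContinuous _ hbound with hφL
    obtain ⟨ψ, hψ, -⟩ := exists_extension_norm_eq (LinearMap.range gl) φL
    set z : Z := (InnerProductSpace.toDual ℂ Z).symm ψ with hz
    have hzw : ∀ w : Z, (inner ℂ z w : ℂ) = ψ w := fun w =>
      InnerProductSpace.toDual_symm_apply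
    have horth : A' y - B' z ∈ V := by
      have hmem : A' y - B' z ∈ Vᗮᗮ := by
        rw [Submodule.mem_orthogonal']
        intro u hu
        have h1 : (inner ℂ (A' y) u : ℂ) = inner ℂ y (A u) := by
          rw [hA']; exact ContinuousLinearMap.adjoint_inner_left A u y
        have h2 : (inner ℂ (B' z) u : ℂ) = inner ℂ z (B u) := by
          rw [hB']; exact ContinuousLinearMap.adjoint_inner_left B u z
        have hPu : P u = u := hPfix u hu
        have h3 : (inner ℂ y (A u) : ℂ) = fl u := by simp [hfl, hPu]
        have h4 : (inner ℂ z (B u) : ℂ) = fl u := by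
          rw [hzw]
          have : ψ (gl u) = φL ⟨gl u, LinearMap.mem_range_self gl u⟩ :=
            hψ ⟨gl u, LinearMap.mem_range_self gl u⟩
          have h5 : (B u : Z) = gl u := by simp [hgl, hPu]
          rw [h5, this]
          simpa [hφL] using hφ_apply u
        rw [inner_sub_left, h1, h2, h3, h4, sub_self]
      rwa [Submodule.orthogonal_orthogonal] at hmem
    have : A' y = (A' y - B' z) + B' z := by abel
    change A' y ∈ _
    rw [this]
    exact Submodule.add_mem_sup horth (LinearMap.mem_range_self (B' : Z →ₗ[ℂ] X) z)
  -- linear algebra: quotient by range B'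
  set RA := LinearMap.range (A' : Y →ₗ[ℂ] X) with hRA
  set RB := LinearMap.range (B' : Z →ₗ[ℂ] X) with hRB
  set q : X →ₗ[ℂ] X ⧸ RB := RB.mkQ with hq
  set F : RA →ₗ[ℂ] X ⧸ RB := q.comp RA.subtype with hF
  have hinj : Function.Injective F := by
    rw [← LinearMap.ker_eq_bot]
    rw [eq_bot_iff]
    intro a ha
    have h1 : (a : X) ∈ RB := by
      have : q (a : X) = 0 := ha
      simpa [hq, Submodule.Quotient.mk_eq_zero] using this
    have h2 : (a : X) ∈ RA ⊓ RB := ⟨a.2, h1⟩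
    rw [hranges] at h2
    exact Submodule.mem_bot ℂ |>.mpr (Subtype.ext (Submodule.mem_bot ℂ |>.mp h2))
  have hrangeF : LinearMap.range F = RA.map q := by
    rw [hF, LinearMap.range_comp, Submodule.range_subtype]
  have hle : RA.map q ≤ V.map q := by
    calc RA.map q ≤ (V ⊔ RB).map q := Submodule.map_mono key
      _ = V.map q ⊔ RB.map q := Submodule.map_sup _ _ _
      _ = V.map q ⊔ ⊥ := by rw [hq, Submodule.mkQ_map_self]
      _ = V.map q := sup_bot_eq _
  haveI : FiniteDimensional ℂ (V.map q) := Module.Finite.map V q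
  haveI hfinmap : FiniteDimensional ℂ (RA.map q) := Submodule.finiteDimensional_of_le hle
  haveI hfinrange : FiniteDimensional ℂ (LinearMap.range F) := by rw [hrangeF]; exact hfinmap
  have e : RA ≃ₗ[ℂ] LinearMap.range F := LinearEquiv.ofInjective F hinj
  haveI hfin : FiniteDimensional ℂ RA := Module.Finite.equiv e.symm
  refine ⟨hfin, ?_⟩
  calc Module.finrank ℂ RA = Module.finrank ℂ (LinearMap.range F) := e.finrank_eq
    _ = Module.finrank ℂ (RA.map q) := by rw [hrangeF]
    _ ≤ Module.finrank ℂ (V.map q) := Submodule.finrank_mono hle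
    _ ≤ Module.finrank ℂ V := Submodule.finrank_map_le q V
end
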